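/- Let n ≥ 2 and consider the star graph S_n. Define f : V(S_n) → ℝ by f(a_1) = 2 and f(a_i) = 1 for all 2 ≤ i ≤ n, and define g : V(S_n) → ℝ by g = f − 3 (pointwise). Then Var_1(f − g) = 0, while Var_1(M_{S_n} f − M_{S_n} g) ≥ 1/2 + 1/n. Consequently, the continuity in the previous sense of f ↦ M_{S_n} f with respect to the p-variation seminorm fails without the assumption that min_{x∈V} |f(x) − f_j(x)| → 0. -/

import Mathlib

open scoped Classical

/-- The ball of radius `r` around `e` in the graph metric of `G`
(only vertices reachable from `e` are at finite distance). -/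
noncomputable def gball {V : Type*} [Fintype V] (G : SimpleGraph V) (e : V) (r : ℕ) :
    Finset V :=
  Finset.univ.filter fun m => G.Reachable e m ∧ G.dist e m ≤ r

/-- The centered Hardy–Littlewood maximal function on a finite graph. -/
noncomputable def mxHL {V : Type*} [Fintype V] (G : SimpleGraph V) (f : V → ℝ) (e : V) : ℝ :=
  ⨆ r : ℕ, (1 / ((gball G e r).card : ℝ)) * ∑ m ∈ gball G e r, |f m|

/-- The fractional centered Hardy–Littlewood maximal function on a finite graph. -/
noncomputable def mxFr {V : Type*} [Fintype V] (G : SimpleGraph V) (α : ℝ) (f : V → ℝ)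
    (e : V) : ℝ :=
  ⨆ r : ℕ, ((gball G e r).card : ℝ) ^ (α - 1) * ∑ m ∈ gball G e r, |f m|

/-- The `p`-variation of `f : V → ℝ` with respect to the graph `G`
(vertices at distance `1` are exactly the adjacent ones). -/
noncomputable def vp {V : Type*} [Fintype V] (G : SimpleGraph V) (p : ℝ) (f : V → ℝ) : ℝ :=
  ((1 / 2) * ∑ v : V, ∑ w : V, if G.Adj v w then |f v - f w| ^ p else 0) ^ (1 / p)

/-- The star graph on `Fin n`, with center the vertex with value `0`. -/
def starG (n : ℕ) : SimpleGraph (Fin n) where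
  Adj v w := v ≠ w ∧ (v.val = 0 ∨ w.val = 0)
  symm := ⟨fun _ _ h => ⟨h.1.symm, h.2.symm⟩⟩
  loopless := ⟨fun _ h => h.1 rfl⟩

/-- The `ℓ²` norm of a function on a finite vertex set. -/
noncomputable def nrm2 {V : Type*} [Fintype V] (g : V → ℝ) : ℝ :=
  Real.sqrt (∑ v : V, g v ^ 2)

/-! Since `f - g` is constant its variation vanishes. In the star graph every ball is `{e}`,
`{e, center}` or the whole graph, so the maximal function is a maximum of at most three
averages: for `|f|` (2 at the centre, 1 on the leaves) it is 2 at the centre and 3/2 on the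
leaves, while for `|g|` (1 at the centre, 2 on the leaves) it is `2 - 1/n` at the centre and 2
on the leaves. So `M f - M g` jumps by `1/2 + 1/n` across every edge. -/

open Finset SimpleGraph

section FiniteGraph

variable {V : Type*} [Fintype V] {G : SimpleGraph V}

lemma mem_gball {e m : V} {r : ℕ} : m ∈ gball G e r ↔ G.Reachable e m ∧ G.dist e m ≤ r := by
  simp [gball]

lemma gball_zero (e : V) : gball G e 0 = {e} := by
  ext m
  rw [mem_gball, mem_singleton, Nat.le_zero]
  refine ⟨fun ⟨hr, hd⟩ => (hr.dist_eq_zero_iff.mp hd).symm, ?_⟩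
  rintro rfl
  exact ⟨Reachable.refl _, dist_self⟩

lemma mem_gball_one {e m : V} : m ∈ gball G e 1 ↔ m = e ∨ G.Adj e m := by
  rw [mem_gball]
  constructor
  · rintro ⟨hr, hd⟩
    interval_cases h : G.dist e m
    · exact Or.inl (hr.dist_eq_zero_iff.mp h).symm
    · exact Or.inr (dist_eq_one_iff_adj.mp h)
  · rintro (rfl | hadj)
    · exact ⟨Reachable.refl m, by simp⟩
    · exact ⟨hadj.reachable, (dist_eq_one_iff_adj.mpr hadj).le⟩

lemma gball_mono (e : V) {r s : ℕ} (h : r ≤ s) : gball G e r ⊆ gball G e s := fun _ hm =>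
  mem_gball.mpr ⟨(mem_gball.mp hm).1, (mem_gball.mp hm).2.trans h⟩

lemma mem_gball_add {e m w : V} {r s : ℕ} (hm : m ∈ gball G e r) (hw : w ∈ gball G m s) :
    w ∈ gball G e (r + s) := by
  obtain ⟨hem, hdm⟩ := mem_gball.mp hm
  obtain ⟨hmw, hdw⟩ := mem_gball.mp hw
  exact mem_gball.mpr ⟨hem.trans hmw, (hem.dist_triangle_left w).trans (by omega)⟩

lemma mxHL_eq_sSup_image (u : V → ℝ) (e : V) :
    mxHL G u e =
      sSup ((fun s : Finset V => 1 / (#s : ℝ) * ∑ m ∈ s, |u m|) '' Set.range (gball G e)) := by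
  rw [mxHL, iSup, ← Set.range_comp]
  rfl

lemma vp_const (G : SimpleGraph V) {p : ℝ} (hp : p ≠ 0) (a : ℝ) : vp G p (fun _ => a) = 0 := by
  simp [vp, Real.zero_rpow hp, hp]

end FiniteGraph

lemma Fintype.sum_ite_eq_sub_add_card_mul {α : Type*} [Fintype α] [DecidableEq α] (c : α)
    (a b : ℝ) :
    ∑ v, (if v = c then a else b) = a - b + Fintype.card α * b := by
  have h : ∀ v, (if v = c then a else b) = (if v = c then a - b else 0) + b := by
    intro v; split_ifs <;> ring
  simp_rw [h]
  rw [sum_add_distrib, sum_ite_eq']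
  simp

section Star

variable {n : ℕ} {c : Fin n}

lemma starG_adj_iff (hc : (c : ℕ) = 0) {v w : Fin n} :
    (starG n).Adj v w ↔ v ≠ w ∧ (v = c ∨ w = c) := by
  simp [starG, Fin.ext_iff, hc]

lemma mem_gball_starG_center_one (hc : (c : ℕ) = 0) (w : Fin n) : w ∈ gball (starG n) c 1 := by
  rw [mem_gball_one, starG_adj_iff hc]
  tauto

lemma mem_gball_starG_two (hc : (c : ℕ) = 0) (v w : Fin n) : w ∈ gball (starG n) v 2 := by
  have hvc : c ∈ gball (starG n) v 1 := by
    rw [mem_gball_one, starG_adj_iff hc]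
    tauto
  exact mem_gball_add hvc (mem_gball_starG_center_one hc w)

lemma range_gball_starG_center (hc : (c : ℕ) = 0) :
    Set.range (gball (starG n) c) = {{c}, univ} := by
  have hbig : ∀ r, gball (starG n) c (r + 1) = univ := fun r =>
    eq_univ_of_forall fun w => gball_mono c (by omega) (mem_gball_starG_center_one hc w)
  ext s
  constructor
  · rintro ⟨_ | r, rfl⟩
    · exact Or.inl (gball_zero c)
    · exact Or.inr (hbig r)
  · rintro (rfl | rfl)
    exacts [⟨0, gball_zero c⟩, ⟨1, hbig 0⟩]

lemma range_gball_starG_leaf (hc : (c : ℕ) = 0) {e : Fin n} (he : e ≠ c) :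
    Set.range (gball (starG n) e) = {{e}, {e, c}, univ} := by
  have hone : gball (starG n) e 1 = {e, c} := by
    ext m
    rw [mem_gball_one, starG_adj_iff hc, mem_insert, mem_singleton]
    grind
  have hbig : ∀ r, gball (starG n) e (r + 2) = univ := fun r =>
    eq_univ_of_forall fun w => gball_mono e (by omega) (mem_gball_starG_two hc e w)
  ext s
  constructor
  · rintro ⟨_ | _ | r, rfl⟩
    · exact Or.inl (gball_zero e)
    · exact Or.inr (Or.inl hone)
    · exact Or.inr (Or.inr (hbig r))
  · rintro (rfl | rfl | rfl)
    exacts [⟨0, gball_zero e⟩, ⟨1, hone⟩, ⟨2, hbig 0⟩]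

lemma mxHL_starG_center (hc : (c : ℕ) = 0) (u : Fin n → ℝ) :
    mxHL (starG n) u c = max |u c| ((∑ m, |u m|) / n) := by
  rw [mxHL_eq_sSup_image, range_gball_starG_center hc, Set.image_pair, csSup_pair]
  simp [div_eq_inv_mul]

lemma mxHL_starG_leaf (hc : (c : ℕ) = 0) {e : Fin n} (he : e ≠ c) (u : Fin n → ℝ) :
    mxHL (starG n) u e = max |u e| (max ((|u e| + |u c|) / 2) ((∑ m, |u m|) / n)) := by
  rw [mxHL_eq_sSup_image, range_gball_starG_leaf hc he, Set.image_insert_eq, Set.image_pair,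
    csSup_insert (Set.toFinite _).bddAbove (Set.insert_nonempty _ _), csSup_pair]
  simp [sum_pair he, card_pair he, div_eq_inv_mul]

lemma vp_one_starG (hc : (c : ℕ) = 0) (u : Fin n → ℝ) :
    vp (starG n) 1 u = ∑ v ∈ univ.erase c, |u c - u v| := by
  have hinner : ∀ v ∈ univ.erase c,
      (∑ w, if (starG n).Adj v w then |u v - u w| ^ (1 : ℝ) else 0) = |u c - u v| := by
    intro v hv
    rw [sum_eq_single c, if_pos ((starG_adj_iff hc).mpr ⟨ne_of_mem_erase hv, Or.inr rfl⟩),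
      Real.rpow_one, abs_sub_comm]
    · intro w _ hw
      rw [if_neg (by rw [starG_adj_iff hc]; grind)]
    · simp
  have hcenter : (∑ w, if (starG n).Adj c w then |u c - u w| ^ (1 : ℝ) else 0) =
      ∑ v ∈ univ.erase c, |u c - u v| := by
    rw [← sum_filter]
    refine sum_congr ?_ fun w _ => Real.rpow_one _
    ext w
    simp [starG_adj_iff hc, eq_comm]
  rw [vp, ← add_sum_erase _ _ (mem_univ c), sum_congr rfl hinner, hcenter, one_div_one,
    Real.rpow_one]
  ring

lemma mxHL_starG_of_abs_eq_two_one (hc : (c : ℕ) = 0) (hn : 2 ≤ n) {u : Fin n → ℝ}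
    (hu : ∀ v, |u v| = if v = c then 2 else 1) (v : Fin n) :
    mxHL (starG n) u v = if v = c then 2 else 3 / 2 := by
  have hnR : (2 : ℝ) ≤ n := by exact_mod_cast hn
  have hsum : ∑ v, |u v| = n + 1 := by
    simp_rw [hu, Fintype.sum_ite_eq_sub_add_card_mul, Fintype.card_fin]; ring
  have hle : (n + 1 : ℝ) / n ≤ (1 + 2) / 2 := by rw [div_le_iff₀ (by positivity)]; linarith
  split_ifs with hv
  · rw [hv, mxHL_starG_center hc, hsum, hu, if_pos rfl, max_eq_left (hle.trans (by norm_num))]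
  · rw [mxHL_starG_leaf hc hv, hsum, hu, hu, if_pos rfl, if_neg hv, max_eq_left hle]
    norm_num

lemma mxHL_starG_of_abs_eq_one_two (hc : (c : ℕ) = 0) {u : Fin n → ℝ}
    (hu : ∀ v, |u v| = if v = c then 1 else 2) (v : Fin n) :
    mxHL (starG n) u v = if v = c then 2 - 1 / (n : ℝ) else 2 := by
  have hnR : (1 : ℝ) ≤ n := by exact_mod_cast c.pos
  have hsum : ∑ v, |u v| = 2 * n - 1 := by
    simp_rw [hu, Fintype.sum_ite_eq_sub_add_card_mul, Fintype.card_fin]; ring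
  have hle : (2 * n - 1 : ℝ) / n ≤ 2 := by rw [div_le_iff₀ (by positivity)]; linarith
  split_ifs with hv
  · rw [hv, mxHL_starG_center hc, hsum, hu, if_pos rfl, max_eq_right]
    · field_simp
    · rw [le_div_iff₀ (by positivity)]; linarith
  · rw [mxHL_starG_leaf hc hv, hsum, hu, hu, if_pos rfl, if_neg hv,
      max_eq_left (max_le (by norm_num) hle)]

end Star

/-- counterexample showing that continuity of `f ↦ M_{S_n} f` with respect
to the `p`-variation seminorm fails without the assumption `min_x |f x - f_j x| → 0`. -/
theorem starGraph_maximal_not_continuous_seminorm (n : ℕ) (hn : 2 ≤ n)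
    (f g : Fin n → ℝ)
    (hf : f = fun v => if v = ⟨0, by omega⟩ then (2 : ℝ) else 1)
    (hg : g = fun v => f v - 3) :
    vp (starG n) 1 (fun v => f v - g v) = 0 ∧
    1 / 2 + 1 / (n : ℝ) ≤
      vp (starG n) 1 (fun v => mxHL (starG n) f v - mxHL (starG n) g v) := by
  set c : Fin n := ⟨0, by omega⟩
  set ℓ : Fin n := ⟨1, hn⟩
  have hc : (c : ℕ) = 0 := rfl
  have hℓ : ℓ ≠ c := by simp [ℓ, c, Fin.ext_iff]
  refine ⟨?_, ?_⟩
  · have hconst : (fun v => f v - g v) = fun _ => 3 := by funext v; rw [hg]; ring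
    rw [hconst, vp_const _ one_ne_zero]
  have hMf := mxHL_starG_of_abs_eq_two_one hc hn (u := f) fun v => by
    by_cases h : v = c <;> norm_num [hf, h]
  have hMg := mxHL_starG_of_abs_eq_one_two hc (u := g) fun v => by
    by_cases h : v = c <;> norm_num [hg, hf, h]
  set Δ : Fin n → ℝ := fun v => mxHL (starG n) f v - mxHL (starG n) g v
  have hΔ : |Δ c - Δ ℓ| = 1 / 2 + 1 / (n : ℝ) := by
    simp only [Δ, hMf, hMg, if_neg hℓ, ↓reduceIte]
    rw [abs_of_pos (by ring_nf; positivity)]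
    ring
  rw [vp_one_starG hc, ← hΔ]
  exact single_le_sum (f := fun v => |Δ c - Δ v|) (fun _ _ => abs_nonneg _)
    (mem_erase.mpr ⟨hℓ, mem_univ ℓ⟩)
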